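/- Let H be a real Hilbert space, T > 0, and C : [0,T] ⇉ H a Hausdorff-continuous set-valued map such that for every t ∈ [0,T] the set C(t) is closed and convex, has nonempty interior, and has bounded topological boundary. Then C satisfies condition (H4). -/

import Mathlib

/-!
Fix `t`. Closed convex sets at Hausdorff distance `< ε` contain the `ε`-erosions of each other's
balls (push a point away from the set along the normal given by the metric projection), so a ball
`B(c, ρ) ⊆ C(t)` survives, slightly smaller, in every `C(s)` with `s` near `t`. Likewise, if
`∂C(t) ⊆ B̄(c, M)`, then a point of `C(t)` farther than `M` from `c` has its whole outward ray from
`c` inside `C(t)`, so by convexity it is the centre of a ball of radius `ρ / 2` in `C(t)`; hence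
no point of `∂C(s)` lies far outside `B̄(c, M)`. Compactness of `[0, T]` makes the radii uniform.
-/

open Set Metric
open scoped ENNReal

/-- A set-valued map is Hausdorff-continuous on `[0,T]`. -/
def HausdorffCts {H : Type*} [NormedAddCommGroup H] (T : ℝ) (C : ℝ → Set H) : Prop :=
  ∀ ε > 0, ∃ δ > 0, ∀ s ∈ Icc (0:ℝ) T, ∀ t ∈ Icc (0:ℝ) T, |s - t| < δ →
    EMetric.hausdorffEdist (C s) (C t) < ENNReal.ofReal ε

/-- Condition (H4) with constants `r, L`. -/
def CondH4 {H : Type*} [NormedAddCommGroup H] [InnerProductSpace ℝ H]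
    (T : ℝ) (C : ℝ → Set H) (r L : ℝ) : Prop :=
  ∀ t ∈ Icc (0:ℝ) T, ∀ x ∈ frontier (C t), ∃ z : H,
    convexHull ℝ ({x} ∪ ball z (2 * r)) ⊆ C t ∧ ‖z - x‖ ≤ L * r

open Filter Topology Bornology
open scoped RealInnerProductSpace

theorem IsPreconnected.subset_of_disjoint_frontier {X : Type*} [TopologicalSpace X]
    {s t : Set X} (hs : IsPreconnected s) (hst : (s ∩ t).Nonempty)
    (hd : Disjoint s (frontier t)) : s ⊆ t := by
  have hint : ∀ x ∈ s, x ∈ closure t → x ∈ interior t := fun x hxs hxt ↦ by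
    by_contra hxi
    exact hd.notMem_of_mem_left hxs ⟨hxt, hxi⟩
  obtain ⟨x, hxs, hxt⟩ := hst
  refine (hs.subset_of_closure_inter_subset isOpen_interior
    ⟨x, hxs, hint x hxs (subset_closure hxt)⟩ ?_).trans interior_subset
  rintro y ⟨hy, hys⟩
  exact hint y hys (closure_mono interior_subset hy)

section NormedSpace

variable {E : Type*} [NormedAddCommGroup E] [NormedSpace ℝ E]

theorem add_smul_sub_mem_of_frontier_subset_closedBall {B : Set E} {b c : E} {M : ℝ}
    (hfr : frontier B ⊆ closedBall c M) (hb : b ∈ B) (hbc : M < dist b c) {t : ℝ} (ht : 1 ≤ t) :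
    c + t • (b - c) ∈ B := by
  have hray : IsPreconnected ((fun τ : ℝ ↦ c + τ • (b - c)) '' Ici 1) :=
    isPreconnected_Ici.image _ (by fun_prop)
  refine hray.subset_of_disjoint_frontier ⟨b, ⟨1, mem_Ici.2 le_rfl, by simp⟩, hb⟩ ?_ ⟨t, ht, rfl⟩
  rw [disjoint_left]
  rintro _ ⟨τ, hτ, rfl⟩ hfrτ
  have hdist : dist (c + τ • (b - c)) c = τ * dist b c := by
    rw [dist_eq_norm, add_sub_cancel_left, norm_smul,
      Real.norm_of_nonneg (by linarith [mem_Ici.1 hτ]), dist_eq_norm]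
  have hτM := mem_closedBall.1 (hfr hfrτ)
  nlinarith [mem_Ici.1 hτ, dist_nonneg (x := b) (y := c)]

theorem Convex.ball_lineMap_subset {B : Set E} (hB : Convex ℝ B) {c q : E} {ρ θ : ℝ}
    (hball : ball c ρ ⊆ B) (hq : q ∈ B) (hθ₀ : 0 ≤ θ) (hθ₁ : θ < 1) :
    ball (AffineMap.lineMap c q θ) ((1 - θ) * ρ) ⊆ B := by
  intro y hy
  have hθ : 0 < 1 - θ := by linarith
  set u := c + (1 - θ)⁻¹ • (y - AffineMap.lineMap c q θ)
  have hu : u ∈ ball c ρ := by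
    rw [mem_ball, dist_eq_norm, add_sub_cancel_left, norm_smul, Real.norm_of_nonneg (by positivity),
      inv_mul_lt_iff₀ hθ, ← dist_eq_norm]
    exact hy
  have hy_eq : (1 - θ) • u + θ • q = y := by
    rw [smul_add, smul_smul, mul_inv_cancel₀ hθ.ne', one_smul, AffineMap.lineMap_apply_module]
    abel
  exact hy_eq ▸ hB (hball hu) hq hθ.le hθ₀ (by ring)

end NormedSpace

section InnerProductSpace

variable {H : Type*} [NormedAddCommGroup H] [InnerProductSpace ℝ H]

theorem norm_sub_le_norm_sub_of_inner_nonpos {x p a : H} (h : ⟪x - p, a - p⟫ ≤ 0) :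
    ‖x - p‖ ≤ ‖x - a‖ := by
  have hsq : ‖x - a‖ ^ 2 = ‖x - p‖ ^ 2 - 2 * ⟪x - p, a - p⟫ + ‖a - p‖ ^ 2 := by
    rw [← norm_sub_sq_real, sub_sub_sub_cancel_right]
  refine (pow_le_pow_iff_left₀ (norm_nonneg _) (norm_nonneg _) two_ne_zero).1 ?_
  nlinarith [sq_nonneg ‖a - p‖]

variable [CompleteSpace H]

theorem ball_sub_subset_of_ball_subset_thickening {A : Set H} (hA : IsClosed A)
    (hAc : Convex ℝ A) {z : H} {σ ε : ℝ} (hε : 0 ≤ ε) (h : ball z σ ⊆ thickening ε A) :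
    ball z (σ - ε) ⊆ A := by
  intro y hy
  by_contra hyA
  obtain ⟨a₀, ha₀, -⟩ := mem_thickening_iff.1 (h (ball_subset_ball (by linarith) hy))
  obtain ⟨p, hp, hproj⟩ := exists_norm_eq_iInf_of_complete_convex ⟨a₀, ha₀⟩ hA.isComplete hAc y
  have hobtuse := (norm_eq_iInf_iff_real_inner_le_zero hAc hp).1 hproj
  have hd : 0 < ‖y - p‖ := norm_pos_iff.2 (sub_ne_zero.2 fun hyp ↦ hyA (hyp ▸ hp))
  -- `w` lies at distance `ε` beyond `y` on the normal ray at `p`, so `p` is still its projection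
  set w := p + (1 + ε / ‖y - p‖) • (y - p)
  have hwp : ‖w - p‖ = ‖y - p‖ + ε := by
    rw [add_sub_cancel_left, norm_smul, Real.norm_of_nonneg (by positivity), add_mul,
      div_mul_cancel₀ _ hd.ne', one_mul]
  have hwy : dist w y = ε := by
    rw [dist_eq_norm, show w - y = (ε / ‖y - p‖) • (y - p) by simp only [w]; module, norm_smul,
      Real.norm_of_nonneg (by positivity), div_mul_cancel₀ _ hd.ne']
  have hwz : w ∈ ball z σ := by
    rw [mem_ball] at hy ⊢
    linarith [dist_triangle w y z]
  obtain ⟨a, ha, hwa⟩ := mem_thickening_iff.1 (h hwz)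
  have hproj_w : ‖w - p‖ ≤ ‖w - a‖ := by
    refine norm_sub_le_norm_sub_of_inner_nonpos ?_
    rw [add_sub_cancel_left, real_inner_smul_left]
    exact mul_nonpos_of_nonneg_of_nonpos (by positivity) (hobtuse a ha)
  rw [dist_eq_norm] at hwa
  linarith

theorem frontier_subset_closedBall_of_thickening {A B : Set H} (hA : IsClosed A)
    (hAc : Convex ℝ A) (hBc : Convex ℝ B) {c : H} {ρ M ε : ℝ} (hε : 0 ≤ ε) (hερ : 4 * ε < ρ)
    (hball : ball c ρ ⊆ B) (hfr : frontier B ⊆ closedBall c M) (hAB : A ⊆ thickening ε B)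
    (hBA : B ⊆ thickening ε A) : frontier A ⊆ closedBall c (M + ε) := by
  intro x hx
  rw [mem_closedBall]
  by_contra! hxc
  obtain ⟨b, hb, hxb⟩ := mem_thickening_iff.1 (hAB (hA.frontier_subset hx))
  have hbc : M < dist b c := by linarith [dist_triangle x b c, dist_comm x b]
  have hbB : ball b (ρ / 2) ⊆ B := by
    have hq := add_smul_sub_mem_of_frontier_subset_closedBall hfr hb hbc one_le_two
    convert hBc.ball_lineMap_subset hball hq (θ := 1 / 2) (by norm_num) (by norm_num) using 2
    · rw [AffineMap.lineMap_apply_module]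
      module
    · ring
  have hxA : ball x (ρ / 2 - ε - ε) ⊆ A :=
    ball_sub_subset_of_ball_subset_thickening hA hAc hε
      (((ball_subset_ball' (by linarith)).trans hbB).trans hBA)
  exact hx.2 (interior_maximal hxA isOpen_ball (mem_ball_self (by linarith)))

end InnerProductSpace

theorem subset_thickening_of_hausdorffEDist_lt {X : Type*} [PseudoMetricSpace X] {s t : Set X}
    {ε : ℝ} (h : hausdorffEDist s t < ENNReal.ofReal ε) : s ⊆ thickening ε t :=
  fun _ hx ↦ mem_thickening_iff_infEDist_lt.2 ((infEDist_le_hausdorffEDist_of_mem hx).trans_lt h)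

def HasUniformInteriorBalls {ι X : Type*} [PseudoMetricSpace X] (C : ι → Set X) (S : Set ι) :
    Prop :=
  ∃ r > 0, ∃ R > 0, ∀ s ∈ S, ∀ x ∈ frontier (C s), ∃ z, ball z r ⊆ C s ∧ dist z x ≤ R

namespace HasUniformInteriorBalls

variable {ι X : Type*} [PseudoMetricSpace X] {C : ι → Set X} {S S' : Set ι}

theorem empty : HasUniformInteriorBalls C ∅ :=
  ⟨1, one_pos, 1, one_pos, fun _ hs ↦ hs.elim⟩

theorem mono (h : HasUniformInteriorBalls C S') (hS : S ⊆ S') : HasUniformInteriorBalls C S := by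
  obtain ⟨r, hr, R, hR, h⟩ := h
  exact ⟨r, hr, R, hR, fun s hs ↦ h s (hS hs)⟩

theorem union (h : HasUniformInteriorBalls C S) (h' : HasUniformInteriorBalls C S') :
    HasUniformInteriorBalls C (S ∪ S') := by
  obtain ⟨r, hr, R, hR, h⟩ := h
  obtain ⟨r', hr', R', hR', h'⟩ := h'
  refine ⟨min r r', lt_min hr hr', max R R', lt_max_of_lt_left hR, ?_⟩
  rintro s (hs | hs) x hx
  · obtain ⟨z, hz, hzx⟩ := h s hs x hx
    exact ⟨z, (ball_subset_ball (min_le_left _ _)).trans hz, hzx.trans (le_max_left _ _)⟩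
  · obtain ⟨z, hz, hzx⟩ := h' s hs x hx
    exact ⟨z, (ball_subset_ball (min_le_right _ _)).trans hz, hzx.trans (le_max_right _ _)⟩

theorem condH4 {H : Type*} [NormedAddCommGroup H] [InnerProductSpace ℝ H] {T : ℝ}
    {C : ℝ → Set H} (h : HasUniformInteriorBalls C (Icc 0 T))
    (hclosed : ∀ t ∈ Icc (0:ℝ) T, IsClosed (C t)) (hconv : ∀ t ∈ Icc (0:ℝ) T, Convex ℝ (C t)) :
    ∃ r > 0, ∃ L > 0, CondH4 T C r L := by
  obtain ⟨r, hr, R, hR, h⟩ := h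
  refine ⟨r / 2, by positivity, 2 * R / r, by positivity, fun t ht x hx ↦ ?_⟩
  obtain ⟨z, hz, hzx⟩ := h t ht x hx
  refine ⟨z, convexHull_min (union_subset ?_ ?_) (hconv t ht), ?_⟩
  · exact singleton_subset_iff.2 ((hclosed t ht).frontier_subset hx)
  · rwa [mul_div_cancel₀ r two_ne_zero]
  · rwa [← dist_eq_norm, show 2 * R / r * (r / 2) = R by field_simp]

end HasUniformInteriorBalls

theorem exists_mem_nhdsWithin_hasUniformInteriorBalls {H : Type*} [NormedAddCommGroup H]
    [InnerProductSpace ℝ H] [CompleteSpace H] {T : ℝ} {C : ℝ → Set H} (hH : HausdorffCts T C)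
    (hclosed : ∀ t ∈ Icc (0:ℝ) T, IsClosed (C t)) (hconv : ∀ t ∈ Icc (0:ℝ) T, Convex ℝ (C t))
    {t : ℝ} (ht : t ∈ Icc 0 T) (hint : (interior (C t)).Nonempty)
    (hbd : IsBounded (frontier (C t))) :
    ∃ U ∈ 𝓝[Icc 0 T] t, HasUniformInteriorBalls C U := by
  obtain ⟨c, hc⟩ := hint
  obtain ⟨ρ, hρ, hball⟩ := isOpen_iff.1 isOpen_interior c hc
  obtain ⟨M, hM, hfr⟩ := hbd.subset_closedBall_lt 0 c
  obtain ⟨δ, hδ, hHδ⟩ := hH (ρ / 8) (by positivity)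
  refine ⟨Icc 0 T ∩ ball t δ, inter_mem_nhdsWithin _ (ball_mem_nhds t hδ),
    ρ / 2, by positivity, M + ρ, by positivity, ?_⟩
  rintro s ⟨hs, hsδ⟩ x hx
  rw [mem_ball, Real.dist_eq] at hsδ
  have hts : C t ⊆ thickening (ρ / 8) (C s) :=
    subset_thickening_of_hausdorffEDist_lt (hHδ t ht s hs (abs_sub_comm s t ▸ hsδ))
  have hst : C s ⊆ thickening (ρ / 8) (C t) :=
    subset_thickening_of_hausdorffEDist_lt (hHδ s hs t ht hsδ)
  have hball_s : ball c (ρ - ρ / 8) ⊆ C s :=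
    ball_sub_subset_of_ball_subset_thickening (hclosed s hs) (hconv s hs) (by positivity)
      ((hball.trans interior_subset).trans hts)
  have hfr_s := frontier_subset_closedBall_of_thickening (hclosed s hs) (hconv s hs) (hconv t ht)
    (by positivity) (by linarith) (hball.trans interior_subset) hfr hst hts
  refine ⟨c, (ball_subset_ball (by linarith)).trans hball_s, ?_⟩
  rw [dist_comm]
  linarith [mem_closedBall.1 (hfr_s hx)]

theorem stmt3_general {H : Type*} [NormedAddCommGroup H] [InnerProductSpace ℝ H] [CompleteSpace H]
    (T : ℝ) (C : ℝ → Set H)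
    (hH : HausdorffCts T C)
    (hclosed : ∀ t ∈ Icc (0:ℝ) T, IsClosed (C t))
    (hconv : ∀ t ∈ Icc (0:ℝ) T, Convex ℝ (C t))
    (hint : ∀ t ∈ Icc (0:ℝ) T, (interior (C t)).Nonempty)
    (hbd : ∀ t ∈ Icc (0:ℝ) T, Bornology.IsBounded (frontier (C t))) :
    ∃ r > 0, ∃ L > 0, CondH4 T C r L := by
  have huniform : HasUniformInteriorBalls C (Icc 0 T) :=
    isCompact_Icc.induction_on (p := HasUniformInteriorBalls C) .empty (fun _ _ hS h ↦ h.mono hS)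
      (fun _ _ ↦ .union) fun t ht ↦
        exists_mem_nhdsWithin_hasUniformInteriorBalls hH hclosed hconv ht (hint t ht) (hbd t ht)
  exact huniform.condH4 hclosed hconv

theorem stmt3 {H : Type*} [NormedAddCommGroup H] [InnerProductSpace ℝ H] [CompleteSpace H]
    (T : ℝ) (hT : 0 < T) (C : ℝ → Set H)
    (hH : HausdorffCts T C)
    (hclosed : ∀ t ∈ Icc (0:ℝ) T, IsClosed (C t))
    (hconv : ∀ t ∈ Icc (0:ℝ) T, Convex ℝ (C t))
    (hint : ∀ t ∈ Icc (0:ℝ) T, (interior (C t)).Nonempty)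
    (hbd : ∀ t ∈ Icc (0:ℝ) T, Bornology.IsBounded (frontier (C t))) :
    ∃ r > 0, ∃ L > 0, CondH4 T C r L :=
  stmt3_general T C hH hclosed hconv hint hbd
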